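/- arXiv:2406.00773 — 2 statements merged into one kernel-verified Lean document; each statement's English description precedes it below -/
import Mathlib

section
/- Let D = {x₀⁽¹⁾,...,x₀⁽ⁿ⁾} ⊂ ℝᵈ be finite, fix x ∈ ℝᵈ, and define for α ∈ (0,1) the softmax-weighted average F_α(x) = (Σᵢ exp(-‖x - √α x₀⁽ⁱ⁾‖²/(2(1-α))) x₀⁽ⁱ⁾) / (Σᵢ exp(-‖x - √α x₀⁽ⁱ⁾‖²/(2(1-α)))). If there is a unique index j minimizing ‖x - x₀⁽ⁱ⁾‖ over i, then lim_{α → 1⁻} F_α(x) = x₀⁽ʲ⁾. -/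
open Finset Filter

/-- The `t → 0` case of the Chain of Forgetting theorem: if `x` has a unique closest
point `x₀ j` in the finite dataset, then the softmax-weighted ideal denoiser
`F_α(x)` converges to `x₀ j` as `α → 1⁻` (within `(0,1)`). -/
theorem ideal_denoiser_tendsto_closest_sample
    (d n : ℕ) (x₀ : Fin n → EuclideanSpace ℝ (Fin d)) (x : EuclideanSpace ℝ (Fin d))
    (j : Fin n) (hj : ∀ i : Fin n, i ≠ j → ‖x - x₀ j‖ < ‖x - x₀ i‖)
    (w : ℝ → Fin n → ℝ)
    (hw : ∀ α i, w α i = Real.exp (-‖x - Real.sqrt α • x₀ i‖ ^ 2 / (2 * (1 - α))))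
    (F : ℝ → EuclideanSpace ℝ (Fin d))
    (hF : ∀ α, F α = (∑ i, w α i)⁻¹ • ∑ i, w α i • x₀ i) :
    Tendsto F (nhdsWithin 1 (Set.Ioo (0 : ℝ) 1)) (nhds (x₀ j)) := by
  set l := nhdsWithin (1 : ℝ) (Set.Ioo (0 : ℝ) 1) with hl
  have hpos : ∀ α i, 0 < w α i := fun α i => by rw [hw]; exact Real.exp_pos _
  -- the ratios tend to Kronecker delta
  have key : ∀ i : Fin n, Tendsto (fun α => w α i / w α j) l
      (nhds (if i = j then 1 else 0)) := by
    intro i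
    by_cases hij : i = j
    · subst hij
      simp only [if_pos rfl]
      have : (fun α => w α i / w α i) = fun _ => (1 : ℝ) := by
        funext α; exact div_self (hpos α i).ne'
      rw [this]; exact tendsto_const_nhds
    · simp only [if_neg hij]
      have heq : (fun α => w α i / w α j) = fun α =>
          Real.exp ((‖x - Real.sqrt α • x₀ j‖ ^ 2 - ‖x - Real.sqrt α • x₀ i‖ ^ 2)
            * (2 * (1 - α))⁻¹) := by
        funext α
        rw [hw, hw, ← Real.exp_sub]
        congr 1
        ring
      rw [heq]
      have h1 : Tendsto (fun α : ℝ => ‖x - Real.sqrt α • x₀ j‖ ^ 2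
          - ‖x - Real.sqrt α • x₀ i‖ ^ 2) l
          (nhds (‖x - x₀ j‖ ^ 2 - ‖x - x₀ i‖ ^ 2)) := by
        have hc : Continuous (fun α : ℝ => ‖x - Real.sqrt α • x₀ j‖ ^ 2
            - ‖x - Real.sqrt α • x₀ i‖ ^ 2) := by
          fun_prop
        have := (hc.tendsto 1).mono_left (nhdsWithin_le_nhds : l ≤ nhds 1)
        simp only [Real.sqrt_one, one_smul] at this
        exact this
      have hL : ‖x - x₀ j‖ ^ 2 - ‖x - x₀ i‖ ^ 2 < 0 := by
        have := hj i hij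
        nlinarith [norm_nonneg (x - x₀ j), norm_nonneg (x - x₀ i)]
      have h2 : Tendsto (fun α : ℝ => (2 * (1 - α))⁻¹) l atTop := by
        apply Tendsto.comp tendsto_inv_nhdsGT_zero
        rw [tendsto_nhdsWithin_iff]
        constructor
        · have hc : Continuous (fun α : ℝ => 2 * (1 - α)) := by fun_prop
          have := (hc.tendsto 1).mono_left (nhdsWithin_le_nhds : l ≤ nhds 1)
          simpa only [sub_self, mul_zero] using this
        · filter_upwards [self_mem_nhdsWithin] with α hα
          have : α < 1 := hα.2
          have : (0:ℝ) < 2 * (1 - α) := by linarith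
          exact this
      have h3 : Tendsto (fun α : ℝ => (‖x - Real.sqrt α • x₀ j‖ ^ 2
          - ‖x - Real.sqrt α • x₀ i‖ ^ 2) * (2 * (1 - α))⁻¹) l atBot :=
        h1.neg_mul_atTop hL h2
      exact Real.tendsto_exp_atBot.comp h3
  -- sum of ratios tends to 1
  have hSum : Tendsto (fun α => ∑ i, w α i / w α j) l (nhds 1) := by
    have := tendsto_finset_sum Finset.univ (fun i _ => key i)
    simpa using this
  -- weighted sum tends to x₀ j
  have hVec : Tendsto (fun α => ∑ i, (w α i / w α j) • x₀ i) l (nhds (x₀ j)) := by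
    have := tendsto_finset_sum Finset.univ (fun i _ => (key i).smul_const (x₀ i))
    simpa using this
  -- rewrite F in ratio form
  have hFe : ∀ α, F α = (∑ i, w α i / w α j)⁻¹ • ∑ i, (w α i / w α j) • x₀ i := by
    intro α
    have hwj : w α j ≠ 0 := (hpos α j).ne'
    rw [hF]
    have e1 : (∑ i, w α i / w α j) = (w α j)⁻¹ * ∑ i, w α i := by
      rw [Finset.mul_sum]; congr 1; funext i; rw [div_eq_inv_mul]
    have e2 : (∑ i, (w α i / w α j) • x₀ i) = (w α j)⁻¹ • ∑ i, w α i • x₀ i := by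
      rw [Finset.smul_sum]; congr 1; funext i
      rw [smul_smul, div_eq_inv_mul]
    rw [e1, e2, mul_inv, inv_inv, smul_smul]
    congr 1
    rw [mul_comm (w α j), mul_assoc, mul_inv_cancel₀ hwj, mul_one]
  have : Tendsto (fun α => (∑ i, w α i / w α j)⁻¹ • ∑ i, (w α i / w α j) • x₀ i)
      l (nhds (x₀ j)) := by
    have := (hSum.inv₀ one_ne_zero).smul hVec
    simpa using this
  exact this.congr (fun α => (hFe α).symm)
end

section
/- Let μ_D = (1/n) Σᵢ x₀⁽ⁱ⁾ be the mean of a finite dataset D ⊂ ℝᵈ and F_α(x) the Gaussian-weighted denoiser average at noise level α. Then for every x ∈ ℝᵈ, ‖F_α(x) - μ_D‖ ≤ diam(D) · (1 - n·min_i p_i(α, x)) where p_i(α, x) are the normalized Gaussian weights and diam(D) is the diameter of D. -/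
/-!
With `m = min_i p_i`, the weights sum to one and the `x₀ i - μ_D` sum to zero, so
`F_α(x) - μ_D = ∑ i, (p_i - m) • (x₀ i - μ_D)`, a combination with nonnegative coefficients of
total mass `1 - n m`. Each `‖x₀ i - μ_D‖` is at most `diam D`, because the centroid lies in the
convex hull of `D`, which has the same diameter as `D`.
-/

open Finset

section Centroid

variable {ι E : Type*} [Fintype ι] [SeminormedAddCommGroup E] [NormedSpace ℝ E]

lemma sum_sub_centroid_eq_zero (x : ι → E) :
    ∑ i, (x i - (Fintype.card ι : ℝ)⁻¹ • ∑ j, x j) = 0 := by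
  rcases isEmpty_or_nonempty ι with hι | hι
  · simp
  rw [sum_sub_distrib, sum_const, card_univ, ← Nat.cast_smul_eq_nsmul ℝ, smul_smul,
    mul_inv_cancel₀ (by positivity), one_smul, sub_self]

lemma norm_sub_centroid_le_diam (x : ι → E) (i : ι) :
    ‖x i - (Fintype.card ι : ℝ)⁻¹ • ∑ j, x j‖ ≤ Metric.diam (Set.range x) := by
  have hcentroid : (Fintype.card ι : ℝ)⁻¹ • ∑ j, x j ∈ convexHull ℝ (Set.range x) := by
    simpa [centerMass] using univ.centerMass_mem_convexHull (w := fun _ ↦ (1 : ℝ))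
      (fun _ _ ↦ zero_le_one) (by simpa using Fintype.card_pos_iff.mpr ⟨i⟩)
      (fun j _ ↦ Set.mem_range_self j)
  rw [← dist_eq_norm, ← convexHull_diam]
  exact Metric.dist_le_diam_of_mem
    (isBounded_convexHull.mpr (Set.finite_range x).isBounded)
    (subset_convexHull ℝ _ (Set.mem_range_self i)) hcentroid

lemma norm_sum_smul_sub_centroid_le (x : ι → E) {w : ι → ℝ} {m : ℝ}
    (hw : ∑ i, w i = 1) (hm : ∀ i, m ≤ w i) :
    ‖∑ i, w i • x i - (Fintype.card ι : ℝ)⁻¹ • ∑ j, x j‖ ≤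
      Metric.diam (Set.range x) * (1 - Fintype.card ι * m) := by
  set μ := (Fintype.card ι : ℝ)⁻¹ • ∑ j, x j
  have hdecomp : ∑ i, w i • x i - μ = ∑ i, (w i - m) • (x i - μ) := by
    calc ∑ i, w i • x i - μ = ∑ i, w i • (x i - μ) := by
          simp only [smul_sub, sum_sub_distrib, ← sum_smul, hw, one_smul]
      _ = ∑ i, w i • (x i - μ) - m • ∑ i, (x i - μ) := by
          rw [sum_sub_centroid_eq_zero, smul_zero, sub_zero]
      _ = ∑ i, (w i - m) • (x i - μ) := by
          rw [smul_sum, ← sum_sub_distrib]; simp only [sub_smul]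
  calc ‖∑ i, w i • x i - μ‖
      ≤ ∑ i, (w i - m) * ‖x i - μ‖ := by
        rw [hdecomp]
        refine (norm_sum_le _ _).trans_eq (sum_congr rfl fun i _ ↦ ?_)
        rw [norm_smul, Real.norm_of_nonneg (sub_nonneg.mpr (hm i))]
    _ ≤ ∑ i, (w i - m) * Metric.diam (Set.range x) := by
        gcongr with i
        · exact sub_nonneg.mpr (hm i)
        · exact norm_sub_centroid_le_diam x i
    _ = Metric.diam (Set.range x) * (1 - Fintype.card ι * m) := by
        rw [← sum_mul, sum_sub_distrib, hw, sum_const, card_univ, nsmul_eq_mul, mul_comm]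

end Centroid

lemma sum_div_sum_self_eq_one {ι K : Type*} [DivisionSemiring K] {s : Finset ι} {f : ι → K}
    (h : ∑ i ∈ s, f i ≠ 0) : ∑ i ∈ s, f i / ∑ j ∈ s, f j = 1 := by
  rw [← sum_div, div_self h]

/-- Deviation of the denoiser from the data mean: with normalized Gaussian weights
`p_i(α,x)`, the denoiser output `F_α(x)` satisfies
`‖F_α(x) - μ_D‖ ≤ diam(D) · (1 - n · min_i p_i(α,x))`. -/
theorem denoiser_deviation_from_mean
    (d n : ℕ) (hn : 0 < n) (x₀ : Fin n → EuclideanSpace ℝ (Fin d))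
    (μD : EuclideanSpace ℝ (Fin d)) (hμD : μD = (n : ℝ)⁻¹ • ∑ i, x₀ i)
    (p : ℝ → EuclideanSpace ℝ (Fin d) → Fin n → ℝ)
    (hp : ∀ α x i, p α x i =
      Real.exp (-‖x - Real.sqrt α • x₀ i‖ ^ 2 / (2 * (1 - α))) /
        ∑ j, Real.exp (-‖x - Real.sqrt α • x₀ j‖ ^ 2 / (2 * (1 - α))))
    (F : ℝ → EuclideanSpace ℝ (Fin d) → EuclideanSpace ℝ (Fin d))
    (hF : ∀ α x, F α x = ∑ i, p α x i • x₀ i) :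
    ∀ α ∈ Set.Ioo (0 : ℝ) 1, ∀ x : EuclideanSpace ℝ (Fin d),
      ‖F α x - μD‖ ≤ Metric.diam (Set.range x₀) *
        (1 - n * (Finset.univ.inf' (Finset.univ_nonempty_iff.mpr
          ⟨⟨0, hn⟩⟩) (p α x))) := by
  intro α _ x
  have hweights : ∑ i, p α x i = 1 := by
    simp only [hp]
    exact sum_div_sum_self_eq_one
      (sum_pos (fun j _ ↦ Real.exp_pos _) (univ_nonempty_iff.mpr ⟨⟨0, hn⟩⟩)).ne'
  have hbound := norm_sum_smul_sub_centroid_le x₀ hweights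
    (m := univ.inf' (univ_nonempty_iff.mpr ⟨⟨0, hn⟩⟩) (p α x)) (fun i ↦ inf'_le _ (mem_univ i))
  rwa [Fintype.card_fin, ← hF, ← hμD] at hbound
end
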